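/- arXiv:2601.19179 — 2 statements merged into one kernel-verified Lean document; each statement's English description precedes it below -/
import Mathlib

section
/- Let Σ be a p×p real positive semi-definite matrix with eigenvalues λ₁ ≥ ⋯ ≥ λ_p ≥ 0 and let Γ = diag(γ₁,…,γ_p) with 0 ≤ γ₁ < ⋯ < γ_p. If U is an orthogonal matrix achieving Tr(Γ^{1/2} Uᵀ Σ U Γ^{1/2}) = Σ_{i=1}^{p} λ_i γ_i, then for each i the i-th column of U is a unit eigenvector of Σ with eigenvalue λ_i. -/
open Matrix BigOperators

/-- `μ` is the sequence of eigenvalues of `A` (with multiplicity) listed in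
decreasing order. -/
def IsDecrEigSeq {p : ℕ} (A : Matrix (Fin p) (Fin p) ℝ) (μ : Fin p → ℝ) : Prop :=
  Antitone μ ∧ ∃ u : Fin p → (Fin p → ℝ),
    (∀ i j, u i ⬝ᵥ u j = if i = j then (1 : ℝ) else 0) ∧
    (∀ i, A.mulVec (u i) = μ i • u i)

/-!
Write `S = Pᵀ diag(λ) P` with `P` orthogonal and put `W = P U`. The trace equals
`∑ᵢ γᵢ ∑ₖ λₖ Wₖᵢ²`, and `W ⊙ W` is doubly stochastic, so by Birkhoff's theorem it is a convex
combination of permutation matrices. By the rearrangement inequality each permutation `σ` costs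
at least `∑ᵢ λᵢ γᵢ`, so at the optimum every `σ` in the support makes `λ ∘ σ⁻¹` antitone, which
forces `λ ∘ σ⁻¹ = λ`. Hence `Wₖᵢ ≠ 0` implies `λₖ = λᵢ`: the `i`-th column of `W` is a
`λᵢ`-eigenvector of `diag(λ)`, and the `i`-th column `Pᵀ Wᵢ` of `U` is one of `S`.
-/

section

variable {n R : Type*} [Fintype n] [DecidableEq n]

theorem hadamard_self_mem_doublyStochastic [CommRing R] [LinearOrder R] [IsStrictOrderedRing R]
    {W : Matrix n n R} (hW : Wᵀ * W = 1) : W ⊙ W ∈ doublyStochastic R n := by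
  have hW' : W * Wᵀ = 1 := mul_eq_one_comm.1 hW
  refine mem_doublyStochastic_iff_sum.2
    ⟨fun i j => mul_self_nonneg (W i j), fun i => ?_, fun j => ?_⟩
  · simpa [mul_apply] using congrFun (congrFun hW' i) i
  · simpa [mul_apply] using congrFun (congrFun hW j) j

theorem eq_transpose_mul_diagonal_mul_of_mulVec_eq_smul [CommRing R]
    {A P : Matrix n n R} {μ : n → R} (hP : Pᵀ * P = 1) (hA : ∀ k, A *ᵥ P k = μ k • P k) :
    A = Pᵀ * diagonal μ * P := by
  have hAP : A * Pᵀ = Pᵀ * diagonal μ := by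
    ext a k
    rw [mul_diagonal, mul_apply]
    simpa [mul_comm, mulVec, dotProduct] using congrFun (hA k) a
  rw [← hAP, mul_assoc, hP, mul_one]

theorem diag_transpose_mul_diagonal_mul [CommRing R] (W : Matrix n n R) (μ : n → R) :
    (Wᵀ * diagonal μ * W).diag = μ ᵥ* (W ⊙ W) := by
  ext i
  rw [diag_apply, mul_apply]
  simp only [mul_diagonal, transpose_apply, vecMul, dotProduct, hadamard_apply]
  exact Finset.sum_congr rfl fun k _ => by ring

theorem trace_diagonal_mul_mul_diagonal [CommRing R] (d : n → R) (A : Matrix n n R) :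
    (diagonal d * A * diagonal d).trace = ∑ i, d i ^ 2 * A i i := by
  simp [trace, sq, mul_comm, mul_left_comm]

theorem diagonal_mulVec_eq_smul [Semiring R] {μ v : n → R} {c : R}
    (h : ∀ k, v k ≠ 0 → μ k = c) : diagonal μ *ᵥ v = c • v := by
  ext k
  by_cases hk : v k = 0
  · simp [mulVec_diagonal, hk]
  · simp [mulVec_diagonal, h k hk]

end

theorem apply_eq_of_mem_doublyStochastic_of_vecMul_dotProduct_eq
    {R : Type*} [Field R] [LinearOrder R] [IsStrictOrderedRing R] {n : ℕ}
    {D : Matrix (Fin n) (Fin n) R} (hD : D ∈ doublyStochastic R (Fin n))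
    {μ γ : Fin n → R} (hμ : Antitone μ) (hγ : StrictMono γ)
    (heq : (μ ᵥ* D) ⬝ᵥ γ = μ ⬝ᵥ γ) {k i : Fin n} (hki : D k i ≠ 0) : μ k = μ i := by
  obtain ⟨w, hw0, hw1, rfl⟩ := exists_eq_sum_perm_of_mem_doublyStochastic hD
  have hcost : ∀ σ : Equiv.Perm (Fin n), (μ ᵥ* σ.permMatrix R) ⬝ᵥ γ = ∑ j, μ (σ.symm j) * γ j :=
    fun σ => by rw [vecMul_permMatrix]; rfl
  have hle : ∀ σ : Equiv.Perm (Fin n), μ ⬝ᵥ γ ≤ (μ ᵥ* σ.permMatrix R) ⬝ᵥ γ := fun σ => by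
    rw [hcost]; exact (hμ.antivary hγ.monotone).sum_mul_le_sum_comp_perm_mul
  have hzero : ∑ σ, w σ * ((μ ᵥ* σ.permMatrix R) ⬝ᵥ γ - μ ⬝ᵥ γ) = 0 := by
    simp only [mul_sub, Finset.sum_sub_distrib, ← Finset.sum_mul, hw1, one_mul]
    rw [← heq, vecMul_sum, sum_dotProduct]
    simp [vecMul_smul, smul_dotProduct]
  rw [Finset.sum_eq_zero_iff_of_nonneg fun σ _ => mul_nonneg (hw0 σ) (sub_nonneg.2 (hle σ))]
    at hzero
  rw [Matrix.sum_apply] at hki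
  obtain ⟨σ, -, hσ⟩ := Finset.exists_ne_zero_of_sum_ne_zero hki
  have hσki : σ k = i := by
    by_contra h
    simp [Equiv.Perm.permMatrix, PEquiv.toMatrix_apply, h] at hσ
  have hwσ : w σ ≠ 0 := fun h => hσ (by simp [h])
  have hσeq : ∑ j, μ (σ.symm j) * γ j = ∑ j, μ j * γ j := by
    have := hzero σ (Finset.mem_univ σ)
    rw [hcost, mul_eq_zero, sub_eq_zero] at this
    exact this.resolve_left hwσ
  have hanti : Antitone (μ ∘ σ.symm) := hγ.trans_antivary
    ((hμ.antivary hγ.monotone).sum_comp_perm_mul_eq_sum_mul_iff.1 hσeq)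
  have := congrFun (Tuple.unique_antitone (τ := 1) hanti hμ) i
  simpa [← hσki] using this

theorem columns_are_eigenvectors_of_optimal_general {p : ℕ}
    (S : Matrix (Fin p) (Fin p) ℝ)
    (lam : Fin p → ℝ) (hlam : IsDecrEigSeq S lam)
    (γ : Fin p → ℝ) (hγpos : ∀ i, 0 ≤ γ i) (hγmono : StrictMono γ)
    (U : Matrix (Fin p) (Fin p) ℝ) (hU : Uᵀ * U = 1)
    (hopt : (Matrix.diagonal (fun i => Real.sqrt (γ i)) * Uᵀ * S * U *
        Matrix.diagonal (fun i => Real.sqrt (γ i))).trace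
      = ∑ i : Fin p, lam i * γ i) :
    ∀ i : Fin p,
      (fun j => U j i) ⬝ᵥ (fun j => U j i) = 1 ∧
      S.mulVec (fun j => U j i) = lam i • (fun j => U j i) := by
  obtain ⟨hanti, u, hu, hSu⟩ := hlam
  set P : Matrix (Fin p) (Fin p) ℝ := Matrix.of u
  have hP : Pᵀ * P = 1 := mul_eq_one_comm.1 <| by
    ext k l; rw [mul_apply', one_apply]; exact hu k l
  have hSP : S = Pᵀ * diagonal lam * P := eq_transpose_mul_diagonal_mul_of_mulVec_eq_smul hP hSu
  set W := P * U
  have hW : Wᵀ * W = 1 := by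
    rw [transpose_mul, mul_assoc, ← mul_assoc Pᵀ, hP, one_mul, hU]
  have hcost : (lam ᵥ* (W ⊙ W)) ⬝ᵥ γ = lam ⬝ᵥ γ := by
    have hconj : diagonal (fun i => √(γ i)) * Uᵀ * S * U * diagonal (fun i => √(γ i)) =
        diagonal (fun i => √(γ i)) * (Wᵀ * diagonal lam * W) * diagonal (fun i => √(γ i)) := by
      simp only [hSP, W, transpose_mul, mul_assoc]
    rw [hconj, trace_diagonal_mul_mul_diagonal] at hopt
    simp only [Real.sq_sqrt (hγpos _), ← diag_apply, diag_transpose_mul_diagonal_mul] at hopt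
    simpa [dotProduct, mul_comm] using hopt
  intro i
  refine ⟨by rw [← one_apply_eq (α := ℝ) i, ← hU, mul_apply']; rfl, ?_⟩
  have hcol : P *ᵥ (fun j => U j i) = fun k => W k i := by
    ext k; simp [W, mul_apply, mulVec, dotProduct]
  have heig : diagonal lam *ᵥ (fun k => W k i) = lam i • fun k => W k i :=
    diagonal_mulVec_eq_smul fun k hk =>
      apply_eq_of_mem_doublyStochastic_of_vecMul_dotProduct_eq
        (hadamard_self_mem_doublyStochastic hW) hanti hγmono hcost (mul_self_ne_zero.2 hk)
  rw [hSP, ← mulVec_mulVec, ← mulVec_mulVec, hcol, heig, mulVec_smul, ← hcol, mulVec_mulVec, hP,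
    one_mulVec]

theorem columns_are_eigenvectors_of_optimal {p : ℕ}
    (S : Matrix (Fin p) (Fin p) ℝ) (hS : S.PosSemidef)
    (lam : Fin p → ℝ) (hlam : IsDecrEigSeq S lam)
    (γ : Fin p → ℝ) (hγpos : ∀ i, 0 ≤ γ i) (hγmono : StrictMono γ)
    (U : Matrix (Fin p) (Fin p) ℝ) (hU : Uᵀ * U = 1)
    (hopt : (Matrix.diagonal (fun i => Real.sqrt (γ i)) * Uᵀ * S * U *
        Matrix.diagonal (fun i => Real.sqrt (γ i))).trace
      = ∑ i : Fin p, lam i * γ i) :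
    ∀ i : Fin p,
      (fun j => U j i) ⬝ᵥ (fun j => U j i) = 1 ∧
      S.mulVec (fun j => U j i) = lam i • (fun j => U j i) :=
  columns_are_eigenvectors_of_optimal_general S lam hlam γ hγpos hγmono U hU hopt
end

section
/- Let X, Y be i.i.d. random vectors taking values in a metric space (M, d), and let 0 < γ₁ < ⋯ < γ_p < 2. Define R(f) = E[ | ‖f(X) − f(Y)‖² − d(X,Y)² | ] + Σ_{i=1}^{p} γ_i Var[f(X)_i] for measurable f : M → ℝ^p with square-integrable coordinates. Then R(f) ≥ E[ c(X,Y)·d(X,Y)² ] where c(x,y) = ½ θᵀΓθ ∈ (0,1) with θ the unit vector in direction f(x) − f(y) (and the inequality R(f) ≥ (γ₁/2)·E[d(X,Y)²] holds in particular); equality of the pointwise bound holds if and only if ‖f(X) − f(Y)‖² = d(X,Y)² almost surely. -/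
/-!
With `u = f(X) - f(Y)`, `D = d(X,Y)²` and `q = ∑ γᵢ uᵢ²` one has `c ‖u‖² = q / 2`, and since
`X`, `Y` are i.i.d., `E[(f(X)ᵢ - f(Y)ᵢ)²] = 2 Var[f(X)ᵢ]`, so `E[q / 2] = ∑ γᵢ Var[f(X)ᵢ]`.
Hence the risk is `E[|‖u‖² - D| + c ‖u‖²]`. As `0 ≤ c ≤ γ_p / 2 < 1`, pointwise
`c D ≤ |‖u‖² - D| + c ‖u‖²` with equality iff `‖u‖² = D`; integrating gives the bound and its
equality case, and `γ₁ ‖u‖² ≤ q` gives the bound with constant `γ₁ / 2`.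
-/

open MeasureTheory ProbabilityTheory

lemma mul_sub_le_abs_mul_abs_sub (a b c : ℝ) : c * (b - a) ≤ |c| * |a - b| := by
  rw [abs_sub_comm, ← abs_mul]
  exact le_abs_self _

lemma mul_le_abs_sub_add_mul {a b c : ℝ} (hc : |c| ≤ 1) : c * b ≤ |a - b| + c * a := by
  have := mul_le_of_le_one_left (abs_nonneg (a - b)) hc
  linarith [mul_sub_le_abs_mul_abs_sub a b c]

lemma mul_eq_abs_sub_add_mul_iff {a b c : ℝ} (hc : |c| < 1) :
    c * b = |a - b| + c * a ↔ a = b := by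
  refine ⟨fun h => ?_, fun hab => by simp [hab]⟩
  by_contra hab
  have := mul_lt_of_lt_one_left (abs_pos.2 (sub_ne_zero.2 hab)) hc
  linarith [mul_sub_le_abs_mul_abs_sub a b c]

section Integral

variable {Ω : Type*} [MeasurableSpace Ω] {μ : Measure Ω} {a b c : Ω → ℝ}

lemma integral_mul_le_integral_abs_sub_add_mul (hc : ∀ ω, |c ω| ≤ 1)
    (hcb : Integrable (fun ω => c ω * b ω) μ)
    (hdom : Integrable (fun ω => |a ω - b ω| + c ω * a ω) μ) :
    ∫ ω, c ω * b ω ∂μ ≤ ∫ ω, |a ω - b ω| + c ω * a ω ∂μ :=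
  integral_mono hcb hdom fun ω => mul_le_abs_sub_add_mul (hc ω)

lemma integral_abs_sub_add_mul_eq_integral_mul_iff (hc : ∀ ω, |c ω| < 1)
    (hcb : Integrable (fun ω => c ω * b ω) μ)
    (hdom : Integrable (fun ω => |a ω - b ω| + c ω * a ω) μ) :
    ∫ ω, |a ω - b ω| + c ω * a ω ∂μ = ∫ ω, c ω * b ω ∂μ ↔ ∀ᵐ ω ∂μ, a ω = b ω := by
  rw [eq_comm, integral_eq_iff_of_ae_le hcb hdom
    (ae_of_all _ fun ω => mul_le_abs_sub_add_mul (hc ω).le)]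
  exact Filter.eventually_congr (ae_of_all _ fun ω => mul_eq_abs_sub_add_mul_iff (hc ω))

end Integral

section WeightedSquares

variable {ι : Type*} [Fintype ι] {γ : ι → ℝ}

lemma sum_mul_sq_le_mul_norm_sq {b : ℝ} (h : ∀ i, γ i ≤ b) (u : EuclideanSpace ℝ ι) :
    ∑ i, γ i * u i ^ 2 ≤ b * ‖u‖ ^ 2 := by
  rw [EuclideanSpace.real_norm_sq_eq, Finset.mul_sum]
  exact Finset.sum_le_sum fun i _ => mul_le_mul_of_nonneg_right (h i) (sq_nonneg _)

lemma mul_norm_sq_le_sum_mul_sq {a : ℝ} (h : ∀ i, a ≤ γ i) (u : EuclideanSpace ℝ ι) :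
    a * ‖u‖ ^ 2 ≤ ∑ i, γ i * u i ^ 2 := by
  rw [EuclideanSpace.real_norm_sq_eq, Finset.mul_sum]
  exact Finset.sum_le_sum fun i _ => mul_le_mul_of_nonneg_right (h i) (sq_nonneg _)

lemma sum_mul_sq_div_norm_sq_le {b : ℝ} (hb0 : 0 ≤ b) (hb : ∀ i, γ i ≤ b)
    (u : EuclideanSpace ℝ ι) :
    (∑ i, γ i * u i ^ 2) / ‖u‖ ^ 2 ≤ b :=
  div_le_of_le_mul₀ (sq_nonneg _) hb0 (sum_mul_sq_le_mul_norm_sq hb u)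

lemma abs_half_mul_sum_mul_sq_div_norm_sq_lt_one {b : ℝ} (h0 : ∀ i, 0 ≤ γ i)
    (hb : ∀ i, γ i ≤ b) (hb2 : b < 2) (u : EuclideanSpace ℝ ι) :
    |1 / 2 * ((∑ i, γ i * u i ^ 2) / ‖u‖ ^ 2)| < 1 := by
  have hq_nonneg : 0 ≤ (∑ i, γ i * u i ^ 2) / ‖u‖ ^ 2 :=
    div_nonneg (Finset.sum_nonneg fun i _ => mul_nonneg (h0 i) (sq_nonneg _)) (sq_nonneg _)
  have hq_le := sum_mul_sq_div_norm_sq_le (le_max_right b 0)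
    (fun i => (hb i).trans (le_max_left b 0)) u
  have hmax : max b 0 < 2 := max_lt hb2 two_pos
  rw [abs_lt]
  constructor <;> linarith

lemma sum_mul_sq_div_norm_sq_mul_norm_sq (γ : ι → ℝ) (u : EuclideanSpace ℝ ι) :
    (∑ i, γ i * u i ^ 2) / ‖u‖ ^ 2 * ‖u‖ ^ 2 = ∑ i, γ i * u i ^ 2 :=
  div_mul_cancel_of_imp fun h => by simp [norm_eq_zero.1 (pow_eq_zero_iff two_ne_zero |>.1 h)]

end WeightedSquares

namespace ProbabilityTheory

lemma IndepFun.integral_sub_sq_eq_two_mul_variance {Ω : Type*} [MeasurableSpace Ω]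
    {μ : Measure Ω} [IsProbabilityMeasure μ] {g h : Ω → ℝ} (hind : IndepFun g h μ)
    (hid : IdentDistrib g h μ μ) (hg : MemLp g 2 μ) :
    ∫ ω, (g ω - h ω) ^ 2 ∂μ = 2 * variance g μ := by
  have hh := hid.memLp_snd hg
  have hmean : μ[g - h] = 0 := by
    rw [Pi.sub_def, integral_sub (hg.integrable one_le_two) (hh.integrable one_le_two),
      hid.integral_eq, sub_self]
  have hvar := variance_eq_sub (hg.sub hh)
  rw [variance_sub hg hh, hind.covariance_eq_zero hg hh, ← hid.variance_eq, hmean] at hvar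
  simp only [Pi.pow_apply, Pi.sub_apply] at hvar
  linarith

section Coordinates

variable {Ω ι : Type*} [MeasurableSpace Ω] [Fintype ι] {μ : Measure Ω}
  {F G : Ω → EuclideanSpace ℝ ι}

lemma IdentDistrib.integrable_coord_sub_sq (hid : IdentDistrib F G μ μ)
    (hF : ∀ i, MemLp (fun ω => F ω i) 2 μ) (i : ι) :
    Integrable (fun ω => (F ω i - G ω i) ^ 2) μ :=
  ((hF i).sub
    ((hid.comp (EuclideanSpace.proj i).continuous.measurable).memLp_snd (hF i))).integrable_sq

lemma IdentDistrib.integrable_sum_mul_sub_sq [IsFiniteMeasure μ] (hid : IdentDistrib F G μ μ)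
    (hF : ∀ i, MemLp (fun ω => F ω i) 2 μ) (γ : ι → ℝ) :
    Integrable (fun ω => ∑ i, γ i * (F ω - G ω) i ^ 2) μ := by
  simp only [PiLp.sub_apply]
  exact integrable_finsetSum _ fun i _ => (hid.integrable_coord_sub_sq hF i).const_mul _

lemma IndepFun.integral_sum_mul_sub_sq [IsProbabilityMeasure μ] (hind : IndepFun F G μ)
    (hid : IdentDistrib F G μ μ) (hF : ∀ i, MemLp (fun ω => F ω i) 2 μ) (γ : ι → ℝ) :
    ∫ ω, ∑ i, γ i * (F ω - G ω) i ^ 2 ∂μ = 2 * ∑ i, γ i * variance (fun ω => F ω i) μ := by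
  simp only [PiLp.sub_apply]
  rw [integral_finsetSum _ fun i _ => (hid.integrable_coord_sub_sq hF i).const_mul _,
    Finset.mul_sum]
  refine Finset.sum_congr rfl fun i _ => ?_
  have hproj := (EuclideanSpace.proj (𝕜 := ℝ) i).continuous.measurable
  have hvar : ∫ ω, (F ω i - G ω i) ^ 2 ∂μ = 2 * variance (fun ω => F ω i) μ :=
    (hind.comp hproj hproj).integral_sub_sq_eq_two_mul_variance (hid.comp hproj) (hF i)
  rw [integral_const_mul, hvar]
  ring

end Coordinates

end ProbabilityTheory

theorem risk_lower_bound_general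
    {Ω M : Type*} [MeasurableSpace Ω] [MetricSpace M] [MeasurableSpace M]
    [BorelSpace M] {p : ℕ} (hp : 0 < p)
    (μ : Measure Ω) [IsProbabilityMeasure μ]
    (X Y : Ω → M)
    (hindep : IndepFun X Y μ) (hid : IdentDistrib X Y μ μ)
    (γ : Fin p → ℝ) (hγmono : StrictMono γ)
    (hγ0 : 0 < γ ⟨0, hp⟩) (hγtop : γ ⟨p - 1, Nat.sub_lt hp one_pos⟩ < 2)
    (f : M → EuclideanSpace ℝ (Fin p)) (hf : Measurable f)
    (h2 : ∀ i, MemLp (fun ω => f (X ω) i) 2 μ)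
    -- `c ω = ½ θᵀΓθ` where `θ` is the unit vector in direction `f(X ω) - f(Y ω)`
    (c : Ω → ℝ)
    (hc : ∀ ω, c ω = (1 / 2) * (∑ i, γ i * (f (X ω) i - f (Y ω) i) ^ 2)
        / ‖f (X ω) - f (Y ω)‖ ^ 2)
    (hint1 : Integrable
      (fun ω => |‖f (X ω) - f (Y ω)‖ ^ 2 - dist (X ω) (Y ω) ^ 2|) μ)
    (hint2 : Integrable (fun ω => dist (X ω) (Y ω) ^ 2) μ)
    (hint3 : Integrable (fun ω => c ω * dist (X ω) (Y ω) ^ 2) μ) :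
    (∫ ω, c ω * dist (X ω) (Y ω) ^ 2 ∂μ ≤
        (∫ ω, |‖f (X ω) - f (Y ω)‖ ^ 2 - dist (X ω) (Y ω) ^ 2| ∂μ)
          + ∑ i, γ i * variance (fun ω => f (X ω) i) μ) ∧
    ((γ ⟨0, hp⟩ / 2) * ∫ ω, dist (X ω) (Y ω) ^ 2 ∂μ ≤
        (∫ ω, |‖f (X ω) - f (Y ω)‖ ^ 2 - dist (X ω) (Y ω) ^ 2| ∂μ)
          + ∑ i, γ i * variance (fun ω => f (X ω) i) μ) ∧
    (((∫ ω, |‖f (X ω) - f (Y ω)‖ ^ 2 - dist (X ω) (Y ω) ^ 2| ∂μ)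
          + ∑ i, γ i * variance (fun ω => f (X ω) i) μ
        = ∫ ω, c ω * dist (X ω) (Y ω) ^ 2 ∂μ) ↔
      (∀ᵐ ω ∂μ, ‖f (X ω) - f (Y ω)‖ ^ 2 = dist (X ω) (Y ω) ^ 2)) := by
  have hγ_ge : ∀ i, γ ⟨0, hp⟩ ≤ γ i := fun i => hγmono.monotone (Fin.le_def.2 (Nat.zero_le _))
  have hγ_le : ∀ i, γ i ≤ γ ⟨p - 1, Nat.sub_lt hp one_pos⟩ := fun i =>
    hγmono.monotone (Fin.le_def.2 (Nat.le_sub_one_of_lt i.isLt))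
  have hc' : ∀ ω, c ω = 1 / 2 * ((∑ i, γ i * (f (X ω) - f (Y ω)) i ^ 2) /
      ‖f (X ω) - f (Y ω)‖ ^ 2) := fun ω => by
    simp only [hc ω, mul_div_assoc, PiLp.sub_apply]
  have hc_abs : ∀ ω, |c ω| < 1 := fun ω => hc' ω ▸
    abs_half_mul_sum_mul_sq_div_norm_sq_lt_one (fun i => hγ0.le.trans (hγ_ge i)) hγ_le hγtop _
  have hc_mul : ∀ ω, c ω * ‖f (X ω) - f (Y ω)‖ ^ 2 =
      1 / 2 * ∑ i, γ i * (f (X ω) - f (Y ω)) i ^ 2 := fun ω => by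
    rw [hc' ω, mul_assoc, sum_mul_sq_div_norm_sq_mul_norm_sq]
  have hq_int : Integrable (fun ω => ∑ i, γ i * (f (X ω) - f (Y ω)) i ^ 2) μ :=
    (hid.comp hf).integrable_sum_mul_sub_sq h2 γ
  have hq_integral : ∫ ω, ∑ i, γ i * (f (X ω) - f (Y ω)) i ^ 2 ∂μ =
      2 * ∑ i, γ i * variance (fun ω => f (X ω) i) μ :=
    (hindep.comp hf hf).integral_sum_mul_sub_sq (hid.comp hf) h2 γ
  have hcu_int : Integrable (fun ω => c ω * ‖f (X ω) - f (Y ω)‖ ^ 2) μ := by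
    simpa only [hc_mul] using hq_int.const_mul (1 / 2)
  have hR : (∫ ω, |‖f (X ω) - f (Y ω)‖ ^ 2 - dist (X ω) (Y ω) ^ 2| ∂μ)
      + ∑ i, γ i * variance (fun ω => f (X ω) i) μ
      = ∫ ω, |‖f (X ω) - f (Y ω)‖ ^ 2 - dist (X ω) (Y ω) ^ 2|
          + c ω * ‖f (X ω) - f (Y ω)‖ ^ 2 ∂μ := by
    rw [integral_add hint1 hcu_int]
    simp only [hc_mul]
    rw [integral_const_mul, hq_integral]
    ring
  have hdom_int : Integrable (fun ω => |‖f (X ω) - f (Y ω)‖ ^ 2 - dist (X ω) (Y ω) ^ 2|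
      + c ω * ‖f (X ω) - f (Y ω)‖ ^ 2) μ := hint1.add hcu_int
  rw [hR]
  refine ⟨integral_mul_le_integral_abs_sub_add_mul (fun ω => (hc_abs ω).le) hint3 hdom_int,
    ?_, integral_abs_sub_add_mul_eq_integral_mul_iff hc_abs hint3 hdom_int⟩
  · rw [← integral_const_mul]
    refine integral_mono (hint2.const_mul _) hdom_int fun ω => ?_
    have hγ0_half : |γ ⟨0, hp⟩ / 2| ≤ 1 := by
      rw [abs_le]; constructor <;> linarith [hγ_le ⟨0, hp⟩]
    have hq_ge := mul_norm_sq_le_sum_mul_sq hγ_ge (f (X ω) - f (Y ω))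
    calc γ ⟨0, hp⟩ / 2 * dist (X ω) (Y ω) ^ 2
        ≤ |‖f (X ω) - f (Y ω)‖ ^ 2 - dist (X ω) (Y ω) ^ 2|
          + γ ⟨0, hp⟩ / 2 * ‖f (X ω) - f (Y ω)‖ ^ 2 := mul_le_abs_sub_add_mul hγ0_half
      _ ≤ _ := by rw [hc_mul]; linarith

theorem risk_lower_bound
    {Ω M : Type*} [MeasurableSpace Ω] [MetricSpace M] [MeasurableSpace M]
    [BorelSpace M] {p : ℕ} (hp : 0 < p)
    (μ : Measure Ω) [IsProbabilityMeasure μ]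
    (X Y : Ω → M) (hX : Measurable X) (hY : Measurable Y)
    (hindep : IndepFun X Y μ) (hid : IdentDistrib X Y μ μ)
    (γ : Fin p → ℝ) (hγmono : StrictMono γ)
    (hγ0 : 0 < γ ⟨0, hp⟩) (hγtop : γ ⟨p - 1, Nat.sub_lt hp one_pos⟩ < 2)
    (f : M → EuclideanSpace ℝ (Fin p)) (hf : Measurable f)
    (h2 : ∀ i, MemLp (fun ω => f (X ω) i) 2 μ)
    -- `c ω = ½ θᵀΓθ` where `θ` is the unit vector in direction `f(X ω) - f(Y ω)`
    (c : Ω → ℝ)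
    (hc : ∀ ω, c ω = (1 / 2) * (∑ i, γ i * (f (X ω) i - f (Y ω) i) ^ 2)
        / ‖f (X ω) - f (Y ω)‖ ^ 2)
    (hint1 : Integrable
      (fun ω => |‖f (X ω) - f (Y ω)‖ ^ 2 - dist (X ω) (Y ω) ^ 2|) μ)
    (hint2 : Integrable (fun ω => dist (X ω) (Y ω) ^ 2) μ)
    (hint3 : Integrable (fun ω => c ω * dist (X ω) (Y ω) ^ 2) μ) :
    (∫ ω, c ω * dist (X ω) (Y ω) ^ 2 ∂μ ≤
        (∫ ω, |‖f (X ω) - f (Y ω)‖ ^ 2 - dist (X ω) (Y ω) ^ 2| ∂μ)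
          + ∑ i, γ i * variance (fun ω => f (X ω) i) μ) ∧
    ((γ ⟨0, hp⟩ / 2) * ∫ ω, dist (X ω) (Y ω) ^ 2 ∂μ ≤
        (∫ ω, |‖f (X ω) - f (Y ω)‖ ^ 2 - dist (X ω) (Y ω) ^ 2| ∂μ)
          + ∑ i, γ i * variance (fun ω => f (X ω) i) μ) ∧
    (((∫ ω, |‖f (X ω) - f (Y ω)‖ ^ 2 - dist (X ω) (Y ω) ^ 2| ∂μ)
          + ∑ i, γ i * variance (fun ω => f (X ω) i) μ
        = ∫ ω, c ω * dist (X ω) (Y ω) ^ 2 ∂μ) ↔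
      (∀ᵐ ω ∂μ, ‖f (X ω) - f (Y ω)‖ ^ 2 = dist (X ω) (Y ω) ^ 2)) :=
  risk_lower_bound_general hp μ X Y hindep hid γ hγmono hγ0 hγtop f hf h2 c hc hint1 hint2 hint3
end
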